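/- arXiv:1910.12148 — 2 statements merged into one kernel-verified Lean document; each statement's English description precedes it below -/
import Mathlib

section
/- Let f be a non-zero polynomial with complex coefficients, and for each natural number n define M_n(f) = ∫₀¹ f(x)^n dx (integrating along the real segment [0,1]). Then M_n(f) ≠ 0 for infinitely many n ∈ ℕ. -/
/-!
Since `∫₀¹ x^k dx = 1/(k+1)`, the moment `M_n(f)` is a fixed ℚ-linear combination of the
coefficients of `f^n`, so its vanishing survives every ring homomorphism. By Zariski's lemma the
ℚ-algebra generated by the coefficients of `f` and the inverse of its leading coefficient maps onto
a number field, without lowering the degree `d`. There, after clearing denominators, let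
`ℓ = nd + 1` be prime: in `ℓ! · M_n` every term but the top one `(nd)! γ^n` (with `γ` the leading
coefficient) is divisible by `ℓ`, so `M_n = 0` forces `ℓ ∣ N(γ)`. Hence `M_n ≠ 0` as soon as
`nd + 1` is a prime larger than `|N(γ)|`, and there are infinitely many primes `≡ 1 mod d`.
-/

open Filter intervalIntegral Polynomial
open scoped Nat

namespace Polynomial

variable {R S : Type*} [CommRing R] [Algebra ℚ R] [CommRing S] [Algebra ℚ S]

/-- `∫₀¹ p`, defined coefficientwise so that it makes sense over any ℚ-algebra. -/
def unitIntegral (p : R[X]) : R := p.sum fun k a ↦ ((k : ℚ) + 1)⁻¹ • a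

theorem unitIntegral_eq_sum_range {p : R[X]} {N : ℕ} (hN : p.natDegree < N) :
    p.unitIntegral = ∑ k ∈ Finset.range N, ((k : ℚ) + 1)⁻¹ • p.coeff k :=
  sum_over_range' p (fun _ ↦ smul_zero _) N hN

theorem unitIntegral_map (f : R →+* S) (p : R[X]) :
    (p.map f).unitIntegral = f p.unitIntegral := by
  have hN : p.natDegree < p.natDegree + 1 := Nat.lt_succ_self _
  rw [unitIntegral_eq_sum_range hN, unitIntegral_eq_sum_range (natDegree_map_le.trans_lt hN),
    map_sum]
  simp only [coeff_map, map_rat_smul]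

theorem unitIntegral_C_mul (c : R) (p : R[X]) : (C c * p).unitIntegral = c * p.unitIntegral := by
  have hN : p.natDegree < p.natDegree + 1 := Nat.lt_succ_self _
  rw [unitIntegral_eq_sum_range hN,
    unitIntegral_eq_sum_range ((natDegree_C_mul_le c p).trans_lt hN), Finset.mul_sum]
  simp only [coeff_C_mul, mul_smul_comm]

theorem unitIntegral_C (c : R) : (C c).unitIntegral = c := by
  rw [unitIntegral_eq_sum_range (N := 1) (by simp)]
  simp

theorem intervalIntegral_eval_eq_unitIntegral (p : ℂ[X]) :
    ∫ x in (0 : ℝ)..1, p.eval (x : ℂ) = p.unitIntegral := by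
  have hpow (k : ℕ) : ∫ x in (0 : ℝ)..1, (x : ℂ) ^ k = ((k : ℂ) + 1)⁻¹ := by
    have := congrArg ((↑) : ℝ → ℂ) (integral_pow (a := 0) (b := 1) k)
    push_cast [← intervalIntegral.integral_ofReal] at this
    simpa using this
  simp_rw [eval_eq_sum, unitIntegral, Polynomial.sum_def]
  rw [intervalIntegral.integral_finsetSum fun k _ ↦
    (by fun_prop : Continuous _).intervalIntegrable _ _]
  refine Finset.sum_congr rfl fun k _ ↦ ?_
  rw [intervalIntegral.integral_const_mul, hpow, Rat.smul_def]
  push_cast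
  ring

theorem factorial_mul_unitIntegral {p : R[X]} {m : ℕ} (hp : p.natDegree ≤ m) :
    ((m + 1)! : R) * p.unitIntegral =
      m ! * p.coeff m + (m + 1) * ∑ k ∈ Finset.range m, ((m ! / (k + 1) : ℕ) : R) * p.coeff k := by
  have hterm {k : ℕ} (hk : k ≤ m) :
      ((m + 1)! : R) * (((k : ℚ) + 1)⁻¹ • p.coeff k) = ((m + 1)! / (k + 1) : ℕ) * p.coeff k := by
    rw [mul_smul_comm, Algebra.smul_def, ← mul_assoc, ← map_natCast (algebraMap ℚ R), ← map_mul,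
      ← map_natCast (algebraMap ℚ R),
      Nat.cast_div (Nat.dvd_factorial k.succ_pos (by omega)) (by positivity)]
    congr 2
    push_cast
    ring
  rw [unitIntegral_eq_sum_range (Nat.lt_succ_of_le hp), Finset.sum_range_succ, mul_add,
    Finset.mul_sum, hterm le_rfl, Nat.factorial_succ, Nat.mul_div_cancel_left _ m.succ_pos,
    add_comm, Finset.mul_sum]
  congr 1
  refine Finset.sum_congr rfl fun k hk ↦ ?_
  have hk := Finset.mem_range.mp hk
  rw [← Nat.factorial_succ, hterm hk.le, Nat.factorial_succ,
    Nat.mul_div_assoc _ (Nat.dvd_factorial k.succ_pos hk)]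
  push_cast
  ring

end Polynomial

section NumberField

variable {K : Type*} [Field K] [Algebra ℚ K]

theorem IsIntegral.exists_int_eq_norm {x : K} (hx : IsIntegral ℤ x) :
    ∃ a : ℤ, Algebra.norm ℚ x = a := by
  obtain ⟨a, ha⟩ := IsIntegrallyClosed.isIntegral_iff.mp (Algebra.isIntegral_norm ℚ hx)
  exact ⟨a, by simpa using ha.symm⟩

theorem succ_dvd_norm_of_factorial_mul_eq [Module.Finite ℚ K] {m : ℕ} (hm : (m + 1).Prime)
    {x y : K} (hy : IsIntegral ℤ y) (hxy : (m ! : K) * x = (m + 1 : K) * y) {a : ℤ}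
    (ha : Algebra.norm ℚ x = a) : ((m + 1 : ℕ) : ℤ) ∣ a := by
  obtain ⟨b, hb⟩ := hy.exists_int_eq_norm
  set D := Module.finrank ℚ K
  have hnorm := congrArg (Algebra.norm ℚ) hxy
  rw [← map_natCast (algebraMap ℚ K), ← Nat.cast_succ, ← map_natCast (algebraMap ℚ K), map_mul,
    map_mul, Algebra.norm_algebraMap, Algebra.norm_algebraMap, ha, hb] at hnorm
  have hZ : (m ! : ℤ) ^ D * a = ((m + 1 : ℕ) : ℤ) ^ D * b := by exact_mod_cast hnorm
  have hcop : IsCoprime ((m + 1 : ℕ) : ℤ) ((m ! : ℕ) : ℤ) :=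
    Nat.isCoprime_iff_coprime.mpr <| (Nat.Prime.coprime_iff_not_dvd hm).mpr fun h ↦ by
      simpa using hm.dvd_factorial.mp h
  exact (hcop.pow_right (n := D)).dvd_of_dvd_mul_left
    (hZ ▸ dvd_mul_of_dvd_left (dvd_pow_self _ Module.finrank_pos.ne') _)

theorem Polynomial.unitIntegral_pow_ne_zero_of_isIntegral [Module.Finite ℚ K] {g : K[X]}
    (hg : ∀ k, IsIntegral ℤ (g.coeff k)) {n : ℕ} (hℓ : (n * g.natDegree + 1).Prime) {b : ℤ}
    (hb : Algebra.norm ℚ g.leadingCoeff = b) (hℓb : ¬ ((n * g.natDegree + 1 : ℕ) : ℤ) ∣ b) :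
    (g ^ n).unitIntegral ≠ 0 := by
  intro h0
  have hcoeff (k : ℕ) : IsIntegral ℤ ((g ^ n).coeff k) := by
    simpa using isIntegral_coeff_prod (Finset.range n) (fun _ ↦ g) (fun _ _ ↦ hg) k
  have hsum := factorial_mul_unitIntegral (natDegree_pow_le (p := g) (n := n))
  rw [h0, mul_zero, coeff_pow_mul_natDegree] at hsum
  have hY : IsIntegral ℤ (-∑ k ∈ Finset.range (n * g.natDegree),
      (((n * g.natDegree) ! / (k + 1) : ℕ) : K) * (g ^ n).coeff k) :=
    .neg <| .sum _ fun k _ ↦ .mul (isIntegral_natCast _) (hcoeff k)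
  have hdvd := succ_dvd_norm_of_factorial_mul_eq (x := g.leadingCoeff ^ n) (a := b ^ n) hℓ hY
    (by linear_combination -hsum) (by rw [map_pow, hb, Int.cast_pow])
  exact hℓb (Int.Prime.dvd_pow' hℓ hdvd)

theorem Polynomial.exists_forall_unitIntegral_pow_ne_zero_of_finite [Module.Finite ℚ K]
    {g : K[X]} (hg : g ≠ 0) :
    ∃ B : ℕ, ∀ n, (n * g.natDegree + 1).Prime → B < n * g.natDegree + 1 →
      (g ^ n).unitIntegral ≠ 0 := by
  obtain ⟨c, hc, hcg⟩ := exists_integral_multiples ℤ ℚ g.coeffs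
  have : CharZero K := charZero_of_injective_algebraMap (algebraMap ℚ K).injective
  have hc' : (c : K) ≠ 0 := Int.cast_ne_zero.mpr hc
  set h := C (c : K) * g
  have hh (k : ℕ) : IsIntegral ℤ (h.coeff k) := by
    rw [coeff_C_mul, ← zsmul_eq_mul]
    by_cases hk : g.coeff k = 0
    · simpa [hk] using isIntegral_zero
    · exact hcg _ (coeff_mem_coeffs hk)
  have hdeg : h.natDegree = g.natDegree := natDegree_C_mul hc'
  obtain ⟨b, hb⟩ := (hh h.natDegree).exists_int_eq_norm
  have hb0 : b ≠ 0 := by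
    rintro rfl
    refine leadingCoeff_ne_zero.mpr (mul_ne_zero (C_ne_zero.mpr hc') hg) ?_
    exact Algebra.norm_eq_zero_iff.mp (hb.trans Int.cast_zero)
  refine ⟨b.natAbs, fun n hℓ hB h0 ↦ ?_⟩
  rw [← hdeg] at hℓ hB
  refine unitIntegral_pow_ne_zero_of_isIntegral hh hℓ hb (fun hdvd ↦ ?_) ?_
  · exact hB.not_ge (Nat.le_of_dvd (Int.natAbs_pos.mpr hb0) (Int.natCast_dvd.mp hdvd))
  · rw [mul_pow, ← C_pow, unitIntegral_C_mul, h0, mul_zero]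

end NumberField

theorem Polynomial.exists_forall_unitIntegral_pow_ne_zero_of_finiteType {R : Type*}
    [CommRing R] [Nontrivial R] [Algebra ℚ R] [Algebra.FiniteType ℚ R] {p : R[X]}
    (hp : IsUnit p.leadingCoeff) :
    ∃ B : ℕ, ∀ n, (n * p.natDegree + 1).Prime → B < n * p.natDegree + 1 →
      (p ^ n).unitIntegral ≠ 0 := by
  obtain ⟨m, hm⟩ := Ideal.exists_maximal R
  have hlc : Ideal.Quotient.mk m p.leadingCoeff ≠ 0 := (hp.map _).ne_zero
  have hdeg : (p.map (Ideal.Quotient.mk m)).natDegree = p.natDegree :=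
    natDegree_map_of_leadingCoeff_ne_zero _ hlc
  have hne : p.map (Ideal.Quotient.mk m) ≠ 0 := fun h ↦
    hlc (by simpa using congrArg (coeff · p.natDegree) h)
  let := Ideal.Quotient.field m
  -- Zariski's lemma: the residue field is a number field.
  have := finite_of_finite_type_of_isJacobsonRing ℚ (R ⧸ m)
  obtain ⟨B, hB⟩ := exists_forall_unitIntegral_pow_ne_zero_of_finite hne
  refine ⟨B, fun n hℓ hBℓ h0 ↦ hB n (hdeg ▸ hℓ) (hdeg ▸ hBℓ) ?_⟩
  rw [← Polynomial.map_pow, unitIntegral_map, h0, map_zero]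

theorem Polynomial.exists_forall_unitIntegral_pow_ne_zero {L : Type*} [Field L] [Algebra ℚ L]
    {f : L[X]} (hf : f ≠ 0) :
    ∃ B : ℕ, ∀ n, (n * f.natDegree + 1).Prime → B < n * f.natDegree + 1 →
      (f ^ n).unitIntegral ≠ 0 := by
  classical
  let A := Algebra.adjoin ℚ (↑(insert f.leadingCoeff⁻¹ f.coeffs) : Set L)
  have : Algebra.FiniteType ℚ A :=
    (Subalgebra.fg_iff_finiteType A).mp (Subalgebra.fg_adjoin_finset _)
  obtain ⟨F, hF⟩ : ∃ F : A[X], F.map (algebraMap A L) = f := by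
    refine (lifts_iff_coeff_lifts f).mpr fun k ↦ ?_
    by_cases hk : f.coeff k = 0
    · exact ⟨0, by simp [hk]⟩
    · exact ⟨⟨f.coeff k, Algebra.subset_adjoin (by simp [coeff_mem_coeffs hk])⟩, rfl⟩
  have hFdeg : F.natDegree = f.natDegree :=
    hF ▸ (natDegree_map_eq_of_injective Subtype.val_injective F).symm
  have hFlc : (F.leadingCoeff : L) = f.leadingCoeff :=
    hF ▸ (leadingCoeff_map_of_injective (f := algebraMap A L) Subtype.val_injective F).symm
  have hFunit : IsUnit F.leadingCoeff := by
    refine .of_mul_eq_one ⟨f.leadingCoeff⁻¹, Algebra.subset_adjoin (by simp)⟩ (Subtype.ext ?_)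
    rw [MulMemClass.coe_mul, hFlc]
    exact mul_inv_cancel₀ (leadingCoeff_ne_zero.mpr hf)
  obtain ⟨B, hB⟩ := exists_forall_unitIntegral_pow_ne_zero_of_finiteType hFunit
  refine ⟨B, fun n hℓ hBℓ h0 ↦ hB n (hFdeg ▸ hℓ) (hFdeg ▸ hBℓ) ?_⟩
  rw [← hF, ← Polynomial.map_pow, unitIntegral_map] at h0
  exact Subtype.val_injective h0

theorem Nat.infinite_setOf_prime_mul_add_one {d : ℕ} (hd : d ≠ 0) :
    {n | (n * d + 1).Prime}.Infinite := by
  refine Set.infinite_of_forall_exists_gt fun a ↦ ?_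
  obtain ⟨p, hp, hap, hp1⟩ := Nat.exists_prime_gt_modEq_one (a * d + 1) hd
  obtain ⟨n, hn⟩ := (Nat.modEq_iff_dvd' hp.one_lt.le).mp hp1.symm
  have hpn : p = n * d + 1 := by rw [mul_comm, ← hn]; omega
  subst hpn
  exact ⟨n, hp, Nat.lt_of_mul_lt_mul_right (Nat.lt_of_add_lt_add_right hap)⟩

/-- For a non-zero complex polynomial `f`, the moments `Mₙ(f) = ∫₀¹ f(x)^n dx`
are non-zero for infinitely many `n`. -/
theorem moment_ne_zero_infinitely_often
    (f : Polynomial ℂ) (hf : f ≠ 0) :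
    {n : ℕ | (∫ x in (0:ℝ)..1, (f.eval (x : ℂ)) ^ n) ≠ 0}.Infinite := by
  simp_rw [← eval_pow, intervalIntegral_eval_eq_unitIntegral]
  rcases eq_or_ne f.natDegree 0 with hd | hd
  · obtain ⟨c, rfl⟩ : ∃ c, f = C c := ⟨_, eq_C_of_natDegree_eq_zero hd⟩
    simp_rw [← C_pow, unitIntegral_C]
    exact Set.infinite_univ.mono fun n _ ↦ pow_ne_zero n (C_ne_zero.mp hf)
  · obtain ⟨B, hB⟩ := exists_forall_unitIntegral_pow_ne_zero hf
    refine ((Nat.infinite_setOf_prime_mul_add_one hd).sdiff (Set.finite_Iic B)).mono ?_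
    rintro n ⟨hℓ, hnB⟩
    exact hB n hℓ (by simp only [Set.mem_Iic, not_le] at hnB; nlinarith [Nat.pos_of_ne_zero hd])
end

section
/- Let f be a polynomial with complex coefficients of degree at least 1, M_n(f) = ∫₀¹ f(x)^n dx, and S = { f(z) : z ∈ ℂ, f'(z) = 0 } ∪ { f(0), f(1) }. Then limsup_{n→∞} |M_n(f)|^{1/n} ≤ max{ |s| : s ∈ S }. -/
/-!
Since `f ^ n` has a polynomial antiderivative `P`, the moment `Mₙ(f)` equals `P 1 - P 0`, and this
difference may be estimated along any path from `0` to `1`. If `b` exceeds `|s|` for every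
`s ∈ S`, then `0` and `1` are joined inside `{|f| < b}`: starting from the segment `[0, 1]`, push
the path down step by step, shrinking `f ∘ γ` radially and lifting the result back through `f`.
The lift exists because `f` has no critical point on the compact set `{ρ ≤ |f| ≤ C}`, so it is a
local homeomorphism there with uniform radii of injectivity and surjectivity. A polygon inside
`{|f| < b}` then gives `|P 1 - P 0| ≤ L bⁿ` with `L` its length, whence `limsup |Mₙ|^(1/n) ≤ b`.
-/

open Filter intervalIntegral Polynomial
open Metric Set Topology

theorem Polynomial.exists_derivative_eq {K : Type*} [Field K] [CharZero K] (p : K[X]) :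
    ∃ P : K[X], derivative P = p := by
  induction p using Polynomial.induction_on' with
  | add p q hp hq =>
    obtain ⟨P, rfl⟩ := hp
    obtain ⟨Q, rfl⟩ := hq
    exact ⟨P + Q, derivative_add⟩
  | monomial n a =>
    refine ⟨monomial (n + 1) (a / (n + 1)), ?_⟩
    rw [derivative_monomial, Nat.add_sub_cancel]
    congr 1
    push_cast
    field_simp

theorem Polynomial.integral_eval_ofReal_eq_sub {p P : ℂ[X]} (hP : derivative P = p) (a b : ℝ) :
    ∫ x in a..b, p.eval (x : ℂ) = P.eval (b : ℂ) - P.eval (a : ℂ) := by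
  refine integral_eq_sub_of_hasDerivAt (f := fun x : ℝ => P.eval (x : ℂ)) (fun x _ => ?_)
    ((p.continuous.comp Complex.continuous_ofReal).intervalIntegrable a b)
  simpa [hP] using (P.hasDerivAt (x : ℂ)).comp_ofReal

theorem JoinedIn.exists_segments_subset {E : Type*} [NormedAddCommGroup E] [NormedSpace ℝ E]
    {U : Set E} {x y : E} (hU : IsOpen U) (h : JoinedIn U x y) :
    ∃ (N : ℕ) (z : ℕ → E), z 0 = x ∧ z N = y ∧ ∀ i < N, segment ℝ (z i) (z (i + 1)) ⊆ U := by
  obtain ⟨γ, hγU⟩ := h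
  obtain ⟨d, hd, hdU⟩ :=
    (isCompact_range γ.continuous).exists_thickening_subset_open hU (range_subset_iff.2 hγU)
  obtain ⟨η, hη, hγη⟩ := Metric.uniformContinuous_iff.1 γ.uniformContinuous_extend d hd
  obtain ⟨N, hN⟩ := exists_nat_one_div_lt hη
  refine ⟨N + 1, fun i => γ.extend (i / (N + 1)), by simp,
    by simp [div_self (Nat.cast_add_one_ne_zero (R := ℝ) N)], fun i _ => ?_⟩
  have hclose : dist (γ.extend ((i + 1 : ℕ) / (N + 1))) (γ.extend (i / (N + 1))) < d := by
    refine hγη ?_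
    rw [Real.dist_eq, Nat.cast_succ, ← sub_div, add_sub_cancel_left,
      abs_of_pos (by positivity)]
    exact hN
  refine ((convex_ball _ d).segment_subset (mem_ball_self hd) hclose).trans
    ((ball_subset_thickening ?_ d).trans hdU)
  exact γ.extend_range ▸ mem_range_self _

theorem JoinedIn.exists_norm_sub_le_mul {𝕜 G : Type*} [RCLike 𝕜] [NormedAddCommGroup G]
    [NormedSpace 𝕜 G] {U : Set 𝕜} {x y : 𝕜} (hU : IsOpen U) (h : JoinedIn U x y) :
    ∃ L, ∀ (g : 𝕜 → G) (C : ℝ), (∀ z ∈ U, DifferentiableAt 𝕜 g z) →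
      (∀ z ∈ U, ‖deriv g z‖ ≤ C) → ‖g y - g x‖ ≤ C * L := by
  obtain ⟨N, z, rfl, rfl, hz⟩ := h.exists_segments_subset hU
  refine ⟨∑ i ∈ Finset.range N, ‖z (i + 1) - z i‖, fun g C hg hC => ?_⟩
  rw [← Finset.sum_range_sub (fun i => g (z i)), Finset.mul_sum]
  refine (norm_sum_le _ _).trans (Finset.sum_le_sum fun i hi => ?_)
  have hseg := hz i (Finset.mem_range.1 hi)
  exact (convex_segment _ _).norm_image_sub_le_of_norm_deriv_le (fun w hw => hg w (hseg hw))
    (fun w hw => hC w (hseg hw)) (left_mem_segment ℝ _ _) (right_mem_segment ℝ _ _)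

theorem HasStrictDerivAt.exists_mem_nhds_injOn {𝕜 : Type*} [NontriviallyNormedField 𝕜]
    [CompleteSpace 𝕜] {f : 𝕜 → 𝕜} {f' a : 𝕜} (hf : HasStrictDerivAt f f' a) (hf' : f' ≠ 0) :
    ∃ U ∈ 𝓝 a, InjOn f U :=
  let ⟨U, hU, hinv⟩ := (hf.eventually_left_inverse hf').exists_mem
  ⟨U, hU, LeftInvOn.injOn hinv⟩

theorem IsCompact.exists_pos_forall_injOn_ball {X Y : Type*} [PseudoMetricSpace X] {F : X → Y}
    {A : Set X} (hA : IsCompact A) (hF : ∀ z ∈ A, ∃ U ∈ 𝓝 z, InjOn F U) :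
    ∃ ε > 0, ∀ z ∈ A, InjOn F (ball z ε) := by
  choose! U hU hinj using hF
  obtain ⟨ε, hε, hball⟩ := lebesgue_number_lemma_of_metric (c := fun z : A => interior (U z)) hA
    (fun _ => isOpen_interior)
    (fun z hz => mem_iUnion.2 ⟨⟨z, hz⟩, mem_interior_iff_mem_nhds.2 (hU z hz)⟩)
  refine ⟨ε, hε, fun z hz => ?_⟩
  obtain ⟨w, hw⟩ := hball z hz
  exact (hinj w w.2).mono (hw.trans interior_subset)

theorem IsCompact.exists_pos_forall_closedBall_subset_image {X Y : Type*} [PseudoMetricSpace X]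
    [PseudoMetricSpace Y] {F : X → Y} {A : Set X} (hA : IsCompact A)
    (hcont : ∀ z ∈ A, ContinuousAt F z) (hopen : ∀ z ∈ A, 𝓝 (F z) ≤ map F (𝓝 z))
    {ε : ℝ} (hε : 0 < ε) :
    ∃ δ > 0, ∀ z ∈ A, closedBall (F z) δ ⊆ F '' closedBall z ε := by
  have hloc : ∀ z ∈ A, ∃ ρ > 0, ball (F z) ρ ⊆ F '' ball z (ε / 2) := fun z hz =>
    Metric.mem_nhds_iff.1 (hopen z hz (image_mem_map (ball_mem_nhds z (half_pos hε))))
  choose! ρ hρ hρF using hloc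
  obtain ⟨t, htA, hcover⟩ := hA.elim_nhds_subcover
    (fun z => ball z (ε / 2) ∩ F ⁻¹' ball (F z) (ρ z / 2)) fun z hz =>
      inter_mem (ball_mem_nhds z (half_pos hε)) (hcont z hz (ball_mem_nhds _ (half_pos (hρ z hz))))
  obtain ⟨δ, hδt, hδ⟩ := (((eventually_all_finset t).2 fun z hz =>
    (eventually_lt_nhds (half_pos (hρ z (htA z hz)))).filter_mono nhdsWithin_le_nhds).and
      (self_mem_nhdsWithin (s := Ioi (0 : ℝ)))).exists
  refine ⟨δ, hδ, fun z hz => ?_⟩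
  obtain ⟨w, hwt, hzw, hFzw⟩ := mem_iUnion₂.1 (hcover hz)
  rw [mem_preimage, mem_ball] at hFzw
  rw [mem_ball] at hzw
  calc closedBall (F z) δ ⊆ ball (F w) (ρ w) :=
        closedBall_subset_ball' (by linarith [hδt w hwt])
    _ ⊆ F '' ball w (ε / 2) := hρF w (htA w hwt)
    _ ⊆ F '' closedBall z ε := image_mono ((ball_subset_ball' (by
        rw [dist_comm]; linarith)).trans ball_subset_closedBall)

theorem exists_continuous_lift {X E Y : Type*} [TopologicalSpace X] [PseudoMetricSpace E]
    [ProperSpace E] [MetricSpace Y] {F : E → Y} (hF : Continuous F) {A : Set E} (hA : IsClosed A)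
    {ε δ : ℝ} (hε : 0 < ε) (hinj : ∀ z ∈ A, InjOn F (ball z (2 * ε)))
    (hsurj : ∀ z ∈ A, closedBall (F z) δ ⊆ F '' closedBall z ε)
    {γ : X → E} (hγ : Continuous γ) {v : X → Y} (hv : Continuous v)
    (hvγ : ∀ t, dist (v t) (F (γ t)) ≤ δ) (hvA : ∀ t, γ t ∉ A → v t = F (γ t)) :
    ∃ γ' : X → E, Continuous γ' ∧ (∀ t, F (γ' t) = v t) ∧ ∀ t, γ t ∉ A → γ' t = γ t := by
  have hlift : ∀ t, ∃ z, dist z (γ t) ≤ ε ∧ F z = v t ∧ (γ t ∉ A → z = γ t) := by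
    intro t
    by_cases ht : γ t ∈ A
    · obtain ⟨z, hz, hFz⟩ := hsurj _ ht (hvγ t)
      exact ⟨z, hz, hFz, fun h => absurd ht h⟩
    · exact ⟨γ t, by simp [hε.le], (hvA t ht).symm, fun _ => rfl⟩
  choose γ' hγ'γ hFγ' hγ'A using hlift
  refine ⟨γ', continuous_iff_continuousAt.2 fun t₀ => ?_, hFγ', hγ'A⟩
  by_cases ht₀ : γ t₀ ∈ A
  -- Near `t₀`, `γ'` stays in a compact ball inside the ball of injectivity at `γ t₀`; every
  -- cluster point `a` there satisfies `F a = v t₀ = F (γ' t₀)`, hence equals `γ' t₀`.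
  · have hnear : ∀ᶠ t in 𝓝 t₀, γ' t ∈ closedBall (γ t₀) (3 * ε / 2) := by
      filter_upwards [hγ.continuousAt (ball_mem_nhds (γ t₀) (half_pos hε))] with t ht
      rw [mem_preimage, mem_ball] at ht
      rw [mem_closedBall]
      linarith [dist_triangle (γ' t) (γ t) (γ t₀), hγ'γ t]
    refine (isCompact_closedBall _ _).tendsto_nhds_of_unique_mapClusterPt hnear fun a ha hcl => ?_
    have hFa : F a = v t₀ := by
      have h1 : MapClusterPt (F a) (𝓝 t₀) v := by
        simpa [Function.comp_def, hFγ'] using hcl.continuousAt_comp hF.continuousAt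
      exact eq_of_nhds_neBot (h1.clusterPt.mono hv.continuousAt)
    rw [mem_closedBall] at ha
    refine hinj _ ht₀ ?_ ?_ (hFa.trans (hFγ' t₀).symm)
    · rw [mem_ball]; linarith
    · rw [mem_ball]; linarith [hγ'γ t₀]
  · have hev : ∀ᶠ t in 𝓝 t₀, γ t ∉ A :=
      hγ.continuousAt.preimage_mem_nhds (hA.isOpen_compl.mem_nhds ht₀)
    exact hγ.continuousAt.congr (hev.mono fun t ht => (hγ'A t ht).symm)

section RadialRetraction

variable {Y : Type*} [NormedAddCommGroup Y] [NormedSpace ℝ Y] {c : ℝ}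

noncomputable def radialRetraction (c : ℝ) (w : Y) : Y :=
  (c / max c ‖w‖) • w

theorem continuous_radialRetraction (hc : 0 < c) : Continuous (radialRetraction (Y := Y) c) :=
  (continuous_const.div (continuous_const.max continuous_norm) fun _ =>
    (lt_max_of_lt_left hc).ne').smul continuous_id

theorem radialRetraction_of_norm_le {w : Y} (hw : ‖w‖ ≤ c) : radialRetraction c w = w := by
  rw [radialRetraction, max_eq_left hw]
  rcases eq_or_ne c 0 with rfl | hc
  · simp [norm_le_zero_iff.1 hw]
  · rw [div_self hc, one_smul]

theorem norm_radialRetraction_le (hc : 0 ≤ c) (w : Y) : ‖radialRetraction c w‖ ≤ c := by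
  rcases le_total ‖w‖ c with hw | hw
  · rwa [radialRetraction_of_norm_le hw]
  · rw [radialRetraction, max_eq_right hw, norm_smul, Real.norm_of_nonneg (by positivity)]
    exact (div_mul_cancel_of_imp fun h => le_antisymm (h ▸ hw) hc).le

theorem dist_radialRetraction_le (hc : 0 ≤ c) (w : Y) :
    dist (radialRetraction c w) w ≤ max (‖w‖ - c) 0 := by
  rcases le_total ‖w‖ c with hw | hw
  · rw [radialRetraction_of_norm_le hw, dist_self]
    exact le_max_right _ _
  · have hsub : (c / ‖w‖) • w - w = (c / ‖w‖ - 1) • w := by rw [sub_smul, one_smul]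
    rw [dist_eq_norm, radialRetraction, max_eq_right hw, hsub, norm_smul, Real.norm_eq_abs,
      abs_sub_comm, abs_of_nonneg (sub_nonneg.2 (div_le_one_of_le₀ hw (norm_nonneg _))), sub_mul,
      one_mul, div_mul_cancel_of_imp fun h => le_antisymm (h ▸ hw) hc]
    exact le_max_left _ _

end RadialRetraction

section PushDown

variable {E Y : Type*} [PseudoMetricSpace E] [ProperSpace E] [NormedAddCommGroup Y]
  [NormedSpace ℝ Y] {F : E → Y} {ρ C ε δ : ℝ} {x y : E}

theorem Path.exists_norm_le_of_norm_le_add (hF : Continuous F) (hε : 0 < ε) (hδ : 0 ≤ δ)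
    (hinj : ∀ z ∈ F ⁻¹' (closedBall 0 C \ ball 0 ρ), InjOn F (ball z (2 * ε)))
    (hsurj : ∀ z ∈ F ⁻¹' (closedBall 0 C \ ball 0 ρ), closedBall (F z) δ ⊆ F '' closedBall z ε)
    (hx : ‖F x‖ < ρ) (hy : ‖F y‖ < ρ) {c : ℝ} (hρc : ρ ≤ c) (γ : Path x y)
    (hγC : ∀ t, ‖F (γ t)‖ ≤ C) (hγc : ∀ t, ‖F (γ t)‖ ≤ c + δ) :
    ∃ γ' : Path x y, ∀ t, ‖F (γ' t)‖ ≤ c := by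
  -- Retract `F ∘ γ` radially onto `closedBall 0 c`, which moves it by at most `δ`, and lift the
  -- result back through `F`; points where `‖F‖ < ρ`, among them the endpoints, do not move.
  have hc : 0 < c := (norm_nonneg _).trans_lt (hx.trans_le hρc)
  have hA : IsClosed (F ⁻¹' (closedBall 0 C \ ball 0 ρ)) :=
    (isClosed_closedBall.sdiff isOpen_ball).preimage hF
  have hnotA : ∀ t, γ t ∉ F ⁻¹' (closedBall 0 C \ ball 0 ρ) → ‖F (γ t)‖ < ρ := fun t ht => by
    simpa [hγC t] using ht
  obtain ⟨γ', hγ'c, hFγ', hγ'A⟩ := exists_continuous_lift hF hA hε hinj hsurj γ.continuous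
    ((continuous_radialRetraction hc).comp (hF.comp γ.continuous))
    (fun t => (dist_radialRetraction_le hc.le _).trans (max_le (sub_le_iff_le_add'.2 (hγc t)) hδ))
    (fun t ht => radialRetraction_of_norm_le ((hnotA t ht).le.trans hρc))
  have hfix : ∀ t, ‖F (γ t)‖ < ρ → γ' t = γ t := fun t ht =>
    hγ'A t fun hA => hA.2 (mem_ball_zero_iff.2 ht)
  refine ⟨⟨⟨γ', hγ'c⟩, (hfix 0 (by rwa [γ.source])).trans γ.source,
    (hfix 1 (by rwa [γ.target])).trans γ.target⟩, fun t => ?_⟩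
  change ‖F (γ' t)‖ ≤ c
  rw [hFγ']
  exact norm_radialRetraction_le hc.le _

theorem Path.exists_norm_le (hF : Continuous F) (hε : 0 < ε) (hδ : 0 < δ)
    (hinj : ∀ z ∈ F ⁻¹' (closedBall 0 C \ ball 0 ρ), InjOn F (ball z (2 * ε)))
    (hsurj : ∀ z ∈ F ⁻¹' (closedBall 0 C \ ball 0 ρ), closedBall (F z) δ ⊆ F '' closedBall z ε)
    (hx : ‖F x‖ < ρ) (hy : ‖F y‖ < ρ) (hρC : ρ ≤ C) (γ : Path x y)
    (hγ : ∀ t, ‖F (γ t)‖ ≤ C) :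
    ∃ γ' : Path x y, ∀ t, ‖F (γ' t)‖ ≤ ρ := by
  have hdescent : ∀ k : ℕ, ∃ γ' : Path x y, ∀ t, ‖F (γ' t)‖ ≤ max ρ (C - k * δ) := by
    intro k
    induction k with
    | zero => exact ⟨γ, fun t => by simpa using (hγ t).trans (le_max_right ρ C)⟩
    | succ k ih =>
      obtain ⟨γ', hγ'⟩ := ih
      have hkδ : 0 ≤ k * δ := by positivity
      refine γ'.exists_norm_le_of_norm_le_add hF hε hδ.le hinj hsurj hx hy (le_max_left _ _)
        (fun t => (hγ' t).trans (max_le hρC (by linarith))) (fun t => (hγ' t).trans ?_)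
      push_cast
      exact max_le (by linarith [le_max_left ρ (C - (k + 1) * δ)])
        (by linarith [le_max_right ρ (C - (k + 1) * δ)])
  obtain ⟨k, hk⟩ := exists_nat_ge ((C - ρ) / δ)
  obtain ⟨γ', hγ'⟩ := hdescent k
  refine ⟨γ', fun t => (hγ' t).trans (max_le le_rfl ?_)⟩
  rw [div_le_iff₀ hδ] at hk
  linarith

end PushDown

theorem Polynomial.joinedIn_norm_eval_le (f : ℂ[X]) (hf : 0 < f.degree) {x y : ℂ} {ρ : ℝ}
    (hcrit : ∀ z, f.derivative.eval z = 0 → ‖f.eval z‖ < ρ) (hx : ‖f.eval x‖ < ρ)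
    (hy : ‖f.eval y‖ < ρ) :
    JoinedIn {z | ‖f.eval z‖ ≤ ρ} x y := by
  obtain ⟨C, hC⟩ := isCompact_univ.exists_bound_of_continuousOn
    (f := fun t => f.eval (Path.segment x y t)) (by fun_prop)
  have hA : IsCompact (f.eval ⁻¹' (closedBall 0 (max ρ C) \ ball 0 ρ)) :=
    (f.isProperMap_eval hf).isCompact_preimage ((isCompact_closedBall 0 _).diff isOpen_ball)
  have hder : ∀ z ∈ f.eval ⁻¹' (closedBall 0 (max ρ C) \ ball 0 ρ), f.derivative.eval z ≠ 0 :=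
    fun z hz h => hz.2 (mem_ball_zero_iff.2 (hcrit z h))
  obtain ⟨ε, hε, hinj⟩ := hA.exists_pos_forall_injOn_ball fun z hz =>
    (f.hasStrictDerivAt z).exists_mem_nhds_injOn (hder z hz)
  obtain ⟨δ, hδ, hsurj⟩ := hA.exists_pos_forall_closedBall_subset_image
    (fun z _ => f.continuous.continuousAt)
    (fun z hz => ((f.hasStrictDerivAt z).map_nhds_eq (hder z hz)).ge) (half_pos hε)
  obtain ⟨γ, hγ⟩ := (Path.segment x y).exists_norm_le f.continuous (half_pos hε) hδ
    (by simpa only [mul_div_cancel₀ ε two_ne_zero] using hinj) hsurj hx hy (le_max_left _ _)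
    (fun t => (hC t trivial).trans (le_max_right _ _))
  exact ⟨γ, hγ⟩

theorem Polynomial.exists_norm_integral_pow_le (f : ℂ[X]) (hf : 0 < f.degree) {r b : ℝ}
    (hcrit : ∀ z, f.derivative.eval z = 0 → ‖f.eval z‖ ≤ r) (h0 : ‖f.eval 0‖ ≤ r)
    (h1 : ‖f.eval 1‖ ≤ r) (hrb : r < b) :
    ∃ L, ∀ n : ℕ, ‖∫ x in (0 : ℝ)..1, f.eval (x : ℂ) ^ n‖ ≤ b ^ n * L := by
  have hρ : r < (r + b) / 2 := by linarith
  have hjoin : JoinedIn {z | ‖f.eval z‖ < b} 0 1 :=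
    (f.joinedIn_norm_eval_le hf (fun z hz => (hcrit z hz).trans_lt hρ) (h0.trans_lt hρ)
      (h1.trans_lt hρ)).mono fun z (hz : ‖f.eval z‖ ≤ _) => show ‖f.eval z‖ < b by linarith
  obtain ⟨L, hL⟩ := hjoin.exists_norm_sub_le_mul (G := ℂ)
    (isOpen_lt f.continuous.norm continuous_const)
  refine ⟨L, fun n => ?_⟩
  obtain ⟨P, hP⟩ := (f ^ n).exists_derivative_eq
  simp_rw [← eval_pow]
  rw [integral_eval_ofReal_eq_sub hP, Complex.ofReal_one, Complex.ofReal_zero]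
  refine hL (fun z => P.eval z) _ (fun z _ => P.differentiableAt) fun z (hz : ‖f.eval z‖ < b) => ?_
  rw [Polynomial.deriv, hP, eval_pow, norm_pow]
  exact pow_le_pow_left₀ (norm_nonneg _) hz.le n

theorem limsup_rpow_one_div_le_of_le_pow_mul {u : ℕ → ℝ} (hu : ∀ n, 0 ≤ u n) {b L : ℝ}
    (hb : 0 ≤ b) (h : ∀ n, u n ≤ b ^ n * L) :
    limsup (fun n : ℕ => u n ^ (1 / (n : ℝ))) atTop ≤ b := by
  have hL : 0 < max L 1 := lt_max_of_lt_right one_pos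
  have hlim : Tendsto (fun n : ℕ => b * max L 1 ^ (1 / (n : ℝ))) atTop (𝓝 b) := by
    simpa using ((tendsto_const_nhds (x := max L 1)).rpow tendsto_one_div_atTop_nhds_zero_nat
      (Or.inl hL.ne')).const_mul b
  refine (limsup_le_limsup ?_ (isCoboundedUnder_le_of_le atTop fun n => Real.rpow_nonneg (hu n) _)
    hlim.isBoundedUnder_le).trans hlim.limsup_eq.le
  filter_upwards [eventually_ne_atTop 0] with n hn
  calc u n ^ (1 / (n : ℝ)) ≤ (b ^ n * max L 1) ^ (1 / (n : ℝ)) :=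
        Real.rpow_le_rpow (hu n) ((h n).trans (by gcongr; exact le_max_left _ _)) (by positivity)
    _ = b * max L 1 ^ (1 / (n : ℝ)) := by
        rw [Real.mul_rpow (by positivity) hL.le, one_div, Real.pow_rpow_inv_natCast hb hn]

/-- For a complex polynomial `f` of degree at least 1, with
`Mₙ(f) = ∫₀¹ f(x)^n dx` and
`S = {f z | f' z = 0} ∪ {f 0, f 1}` (a finite set),
we have `limsup |Mₙ(f)|^(1/n) ≤ max {|s| : s ∈ S}`. -/
theorem limsup_abs_moment_rpow_le_max_S
    (f : Polynomial ℂ) (hdeg : 1 ≤ f.natDegree)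
    (S : Set ℂ)
    (hS : S = {w : ℂ | ∃ z : ℂ, f.derivative.eval z = 0 ∧ f.eval z = w}
            ∪ {f.eval 0, f.eval 1}) :
    Filter.limsup
      (fun n : ℕ =>
        ‖∫ x in (0:ℝ)..1, (f.eval (x : ℂ)) ^ n‖ ^ (1 / (n : ℝ)))
      Filter.atTop
      ≤ sSup ((fun z : ℂ => ‖z‖) '' S) := by
  have hf : 0 < f.degree := natDegree_pos_iff_degree_pos.1 hdeg
  have hf' : f.derivative ≠ 0 := fun h => by
    simp [derivative_eq_zero.1 h] at hdeg
  have hSfin : S.Finite :=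
    hS ▸ ((f.derivative.finite_setOfPred_isRoot hf').image _).union (toFinite _)
  have hle : ∀ w ∈ S, ‖w‖ ≤ sSup ((fun z : ℂ => ‖z‖) '' S) := fun w hw =>
    le_csSup (hSfin.image _).bddAbove (mem_image_of_mem _ hw)
  have h0 : ‖f.eval 0‖ ≤ sSup ((fun z : ℂ => ‖z‖) '' S) := hle _ (by simp [hS])
  refine le_of_forall_gt_imp_ge_of_dense fun b hb => ?_
  obtain ⟨L, hL⟩ := f.exists_norm_integral_pow_le hf
    (fun z hz => hle _ (by rw [hS]; exact Or.inl ⟨z, hz, rfl⟩)) h0 (hle _ (by simp [hS])) hb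
  exact limsup_rpow_one_div_le_of_le_pow_mul (fun n => norm_nonneg _)
    ((norm_nonneg _).trans (h0.trans hb.le)) hL
end
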